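/- arXiv:quant-ph/0105114 — 5 statements merged into one kernel-verified Lean document; each statement's English description precedes it below -/
import Mathlib

section
/- For the mean operator S_N(f) = (1/N)∑_{i=1}^N f(i) on the unit ball L_p^N = {f ∈ ℝ^N : (1/N)∑|f(i)|^p ≤ 1} with 1 ≤ p < ∞, the algorithm A_n*(f) = (1/N)∑_{i=1}^n f(i) has worst-case error sup_{f ∈ L_p^N} |S_N(f) − A_n*(f)| = ((N−n)/N)^{1−1/p} for n < N. -/
/-- Worst-case error of the truncated mean `A_n^*(f) = (1/N)∑_{i<n} f i`
on the unit ball `L_p^N` equals `((N-n)/N)^(1-1/p)` for `1 ≤ p < ∞`, `n < N`. -/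
theorem stmt0 (N n : ℕ) (p : ℝ) (hp : 1 ≤ p) (hn : 0 < n) (hnN : n < N) :
    IsGreatest
      {e : ℝ | ∃ f : ℕ → ℝ,
        (1 / (N : ℝ)) * ∑ i ∈ Finset.range N, |f i| ^ p ≤ 1 ∧
        e = |(1 / (N : ℝ)) * ∑ i ∈ Finset.range N, f i -
              (1 / (N : ℝ)) * ∑ i ∈ Finset.range n, f i|}
      ((((N : ℝ) - n) / N) ^ (1 - 1 / p)) := by
  have hp0 : (0 : ℝ) < p := one_pos.trans_le hp
  have hN0 : (0 : ℝ) < N := by exact_mod_cast hn.trans hnN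
  have hnN' : (n : ℝ) < N := by exact_mod_cast hnN
  have ha : (0 : ℝ) < (N : ℝ) - n := sub_pos.2 hnN'
  have hcard : ((Finset.Ico n N).card : ℝ) = (N : ℝ) - n := by
    rw [Nat.card_Ico, Nat.cast_sub hnN.le]
  constructor
  · -- membership: the extremal function
    set c : ℝ := ((N : ℝ) / ((N : ℝ) - n)) ^ (1 / p) with hc
    have hc0 : 0 ≤ c := Real.rpow_nonneg (by positivity) _
    have hcp : c ^ p = (N : ℝ) / ((N : ℝ) - n) := by
      rw [hc, ← Real.rpow_mul (by positivity), one_div, inv_mul_cancel₀ hp0.ne',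
        Real.rpow_one]
    refine ⟨fun i => if i < n then 0 else c, ?_, ?_⟩
    · have h1 : ∑ i ∈ Finset.range n, |(if i < n then (0 : ℝ) else c)| ^ p = 0 := by
        apply Finset.sum_eq_zero; intro i hi
        rw [if_pos (Finset.mem_range.1 hi), abs_zero, Real.zero_rpow hp0.ne']
      have h2 : ∑ i ∈ Finset.Ico n N, |(if i < n then (0 : ℝ) else c)| ^ p = (N : ℝ) := by
        have : ∀ i ∈ Finset.Ico n N,
            |(if i < n then (0 : ℝ) else c)| ^ p = (N : ℝ) / ((N : ℝ) - n) := by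
          intro i hi
          rw [if_neg (not_lt.2 (Finset.mem_Ico.1 hi).1), abs_of_nonneg hc0, hcp]
        rw [Finset.sum_congr rfl this, Finset.sum_const, nsmul_eq_mul, hcard,
          mul_div_cancel₀ _ ha.ne']
      rw [← Finset.sum_range_add_sum_Ico _ hnN.le, h1, h2, zero_add, one_div,
        inv_mul_cancel₀ hN0.ne']
    · have hdiff : (1 / (N : ℝ)) * ∑ i ∈ Finset.range N, (if i < n then (0 : ℝ) else c) -
          (1 / (N : ℝ)) * ∑ i ∈ Finset.range n, (if i < n then (0 : ℝ) else c) =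
          (1 / (N : ℝ)) * ∑ i ∈ Finset.Ico n N, (if i < n then (0 : ℝ) else c) := by
        rw [Finset.sum_Ico_eq_sub _ hnN.le]; ring
      have hIco : ∑ i ∈ Finset.Ico n N, (if i < n then (0 : ℝ) else c) = ((N : ℝ) - n) * c := by
        have : ∀ i ∈ Finset.Ico n N, (if i < n then (0 : ℝ) else c) = c := fun i hi =>
          if_neg (not_lt.2 (Finset.mem_Ico.1 hi).1)
        rw [Finset.sum_congr rfl this, Finset.sum_const, nsmul_eq_mul, hcard]
      rw [hdiff, hIco, abs_of_nonneg (by positivity)]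
      set a : ℝ := ((N : ℝ) - n) / N with ha'
      have ha0 : 0 < a := by positivity
      have hca : c = a ^ (-(1 / p)) := by
        rw [hc, Real.rpow_neg ha0.le, ← Real.inv_rpow ha0.le, ha', inv_div]
      rw [hca, sub_eq_add_neg, Real.rpow_add ha0, Real.rpow_one]
      ring
  · -- upper bound
    rintro e ⟨f, hf, rfl⟩
    have hsum_le : ∑ i ∈ Finset.range N, |f i| ^ p ≤ (N : ℝ) := by
      have h := mul_le_mul_of_nonneg_left hf hN0.le
      rw [mul_one, ← mul_assoc, mul_one_div, div_self hN0.ne', one_mul] at h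
      exact h
    have hIco_le : ∑ i ∈ Finset.Ico n N, |f i| ^ p ≤ (N : ℝ) := by
      refine le_trans (Finset.sum_le_sum_of_subset_of_nonneg ?_
        (fun i _ _ => Real.rpow_nonneg (abs_nonneg _) _)) hsum_le
      rw [Finset.range_eq_Ico]
      exact Finset.Ico_subset_Ico (Nat.zero_le n) le_rfl
    have hold : ∑ i ∈ Finset.Ico n N, |f i| ≤
        ((N : ℝ) - n) ^ (1 - 1 / p) * (∑ i ∈ Finset.Ico n N, |f i| ^ p) ^ (1 / p) := by
      have h := Real.inner_le_weight_mul_Lp_of_nonneg (Finset.Ico n N) hp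
        (fun _ => (1 : ℝ)) (fun i => |f i|) (fun _ => zero_le_one) (fun i => abs_nonneg _)
      simpa [hcard, one_div, Nat.cast_sub hnN.le] using h
    have hnonneg : 0 ≤ ∑ i ∈ Finset.Ico n N, |f i| ^ p :=
      Finset.sum_nonneg fun i _ => Real.rpow_nonneg (abs_nonneg _) _
    calc |(1 / (N : ℝ)) * ∑ i ∈ Finset.range N, f i -
            (1 / (N : ℝ)) * ∑ i ∈ Finset.range n, f i|
        = (1 / (N : ℝ)) * |∑ i ∈ Finset.Ico n N, f i| := by
          rw [Finset.sum_Ico_eq_sub _ hnN.le, ← mul_sub, abs_mul,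
            abs_of_nonneg (by positivity : (0 : ℝ) ≤ 1 / (N : ℝ))]
      _ ≤ (1 / (N : ℝ)) * ∑ i ∈ Finset.Ico n N, |f i| :=
          mul_le_mul_of_nonneg_left (Finset.abs_sum_le_sum_abs _ _) (by positivity)
      _ ≤ (1 / (N : ℝ)) * (((N : ℝ) - n) ^ (1 - 1 / p) *
            (∑ i ∈ Finset.Ico n N, |f i| ^ p) ^ (1 / p)) :=
          mul_le_mul_of_nonneg_left hold (by positivity)
      _ ≤ (1 / (N : ℝ)) * (((N : ℝ) - n) ^ (1 - 1 / p) * (N : ℝ) ^ (1 / p)) := by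
          refine mul_le_mul_of_nonneg_left (mul_le_mul_of_nonneg_left ?_ (by positivity))
            (by positivity)
          exact Real.rpow_le_rpow hnonneg hIco_le (by positivity)
      _ = (((N : ℝ) - n) / N) ^ (1 - 1 / p) := by
          rw [Real.div_rpow ha.le hN0.le]
          have hNe : (0 : ℝ) < (N : ℝ) ^ (1 - 1 / p) := Real.rpow_pos_of_pos hN0 _
          have key : (N : ℝ) ^ (1 - 1 / p) * (N : ℝ) ^ (1 / p) = N := by
            rw [← Real.rpow_add hN0]
            norm_num
          have h2 : (N : ℝ) ^ (1 / p) = N / (N : ℝ) ^ (1 - 1 / p) := by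
            rw [eq_div_iff hNe.ne', mul_comm, key]
          rw [h2]
          field_simp
end

section
/- For every deterministic algorithm A_n of the form A_n(f) = φ(f(x_1),…,f(x_n)) with n < N points x_i ∈ {1,…,N} and arbitrary map φ : ℝ^n → ℝ, the worst-case error on L_∞^N satisfies sup_{f ∈ L_∞^N} |S_N(f) − A_n(f)| ≥ (N−n)/N. -/
/-- Lower bound `(N-n)/N` on `L_∞^N` for every deterministic algorithm
using `n < N` fixed evaluation points. -/
theorem stmt2 (N n : ℕ) (hn : 0 < n) (hnN : n < N)
    (x : Fin n → Fin N) (φ : (Fin n → ℝ) → ℝ) :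
    ∃ f : Fin N → ℝ, (∀ i, |f i| ≤ 1) ∧
      ((N : ℝ) - n) / N ≤
        |(1 / (N : ℝ)) * ∑ i, f i - φ (fun j => f (x j))| := by
  have hN : (0:ℝ) < N := by exact_mod_cast Nat.lt_of_lt_of_le (Nat.zero_lt_of_lt hnN) le_rfl
  set S : Finset (Fin N) := Finset.image x Finset.univ with hS
  have hcard : (S.card : ℝ) ≤ n := by
    have := Finset.card_image_le (s := (Finset.univ : Finset (Fin n))) (f := x)
    simp at this
    exact_mod_cast le_trans (Nat.cast_le.mpr this) le_rfl
  set g : Fin N → ℝ := fun i => if i ∈ S then 0 else 1 with hg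
  have hgx : ∀ j, g (x j) = 0 := by
    intro j
    simp [hg, hS]
  have hsum : ∑ i, g i = (N : ℝ) - S.card := by
    simp only [hg]
    rw [Finset.sum_ite, Finset.sum_const_zero, Finset.sum_const, zero_add, nsmul_eq_mul, mul_one]
    rw [Finset.filter_not, Finset.filter_mem_eq_inter, Finset.univ_inter]
    rw [Finset.card_sdiff_of_subset (Finset.subset_univ S)]
    rw [Nat.cast_sub (by simpa using Finset.card_le_univ S)]
    simp
  set T : ℝ := (1 / (N : ℝ)) * ∑ i, g i with hT
  set d : ℝ := ((N : ℝ) - n) / N with hd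
  have hTd : d ≤ T := by
    rw [hT, hsum, hd, div_eq_inv_mul, one_div]
    apply mul_le_mul_of_nonneg_left _ (by positivity)
    linarith
  set c : ℝ := φ (fun _ => 0) with hc
  by_cases h : d ≤ |T - c|
  · refine ⟨g, ?_, ?_⟩
    · intro i; simp only [hg]; split <;> simp
    · have : (fun j => g (x j)) = fun _ => 0 := funext fun j => hgx j
      rw [this]; exact h
  · push_neg at h
    refine ⟨fun i => -g i, ?_, ?_⟩
    · intro i; simp only [hg]; split <;> simp
    · have he : (fun j => -g (x j)) = fun _ => (0:ℝ) := by
        funext j; rw [hgx j]; ring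
      simp only [he]
      have hsum' : ∑ i, -g i = -∑ i, g i := by
        rw [Finset.sum_neg_distrib]
      rw [hsum']
      have : (1 / (N:ℝ)) * -∑ i, g i - c = -(T + c) := by rw [hT]; ring
      rw [this, abs_neg]
      have h1 : |T - c| < d := h
      have := abs_sub_abs_le_abs_sub (T + c) (T - c)
      have h2 : |(T + c) - (T - c)| = |2 * c| := by ring_nf
      -- |T+c| ≥ 2T - |T-c| since |T+c| + |T-c| ≥ |2T| = 2T
      have key : 2 * T ≤ |T + c| + |T - c| := by
        have : |(T + c) + (T - c)| ≤ |T + c| + |T - c| := abs_add_le _ _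
        have h2T : |(T + c) + (T - c)| = |2*T| := by ring_nf
        rw [h2T] at this
        calc 2 * T ≤ |2 * T| := le_abs_self _
          _ ≤ _ := this
      linarith
end

section
/- For every deterministic algorithm A_n(f) = φ(f(x_1),…,f(x_n)) using n < N fixed indices, the worst-case error on the unit ball L_p^N (1 ≤ p < ∞) is at least ((N−n)/N)^{1−1/p}. -/
/-- Lower bound `((N-n)/N)^(1-1/p)` on `L_p^N` (`1 ≤ p < ∞`) for every
deterministic algorithm using `n < N` fixed evaluation points. -/
theorem stmt3 (N n : ℕ) (p : ℝ) (hp : 1 ≤ p) (hn : 0 < n) (hnN : n < N)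
    (x : Fin n → Fin N) (φ : (Fin n → ℝ) → ℝ) :
    ∃ f : Fin N → ℝ, (1 / (N : ℝ)) * ∑ i, |f i| ^ p ≤ 1 ∧
      (((N : ℝ) - n) / N) ^ (1 - 1 / p) ≤
        |(1 / (N : ℝ)) * ∑ i, f i - φ (fun j => f (x j))| := by
  classical
  set T : Finset (Fin N) := (Finset.univ.image x)ᶜ with hT
  have hNpos : 0 < N := lt_trans hn hnN
  have hcard : N - n ≤ T.card := by
    have h1 : (Finset.univ.image x).card ≤ n := by
      calc (Finset.univ.image x).card ≤ (Finset.univ : Finset (Fin n)).card :=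
            Finset.card_image_le
        _ = n := by simp
    have h2 : T.card = N - (Finset.univ.image x).card := by
      rw [hT, Finset.card_compl, Fintype.card_fin]
    omega
  have hm : 0 < T.card := lt_of_lt_of_le (Nat.sub_pos_of_lt hnN) hcard
  set m : ℝ := (T.card : ℝ) with hmdef
  have hmpos : 0 < m := by rw [hmdef]; exact_mod_cast hm
  have hNr : (0:ℝ) < N := by exact_mod_cast hNpos
  have hppos : 0 < p := lt_of_lt_of_le one_pos hp
  set c : ℝ := ((N:ℝ)/m) ^ (1/p) with hc
  have hcpos : 0 < c := Real.rpow_pos_of_pos (div_pos hNr hmpos) _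
  set ε : ℝ := if φ (fun _ => 0) ≤ 0 then 1 else -1 with hε
  have habsε : |ε| = 1 := by rw [hε]; split <;> simp
  refine ⟨fun i => if i ∈ T then ε * c else 0, ?_, ?_⟩
  · have hsum : ∑ i, |(if i ∈ T then ε * c else 0)| ^ p = m * c ^ p := by
      have h1 : ∀ i : Fin N, |(if i ∈ T then ε * c else 0)| ^ p
          = if i ∈ T then c ^ p else 0 := by
        intro i
        by_cases h : i ∈ T
        · simp [h, abs_mul, habsε, abs_of_pos hcpos]
        · simp [h, Real.zero_rpow (ne_of_gt hppos)]
      rw [Finset.sum_congr rfl (fun i _ => h1 i)]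
      rw [Finset.sum_ite_mem, Finset.univ_inter, Finset.sum_const, nsmul_eq_mul]
    have hcp : c ^ p = (N:ℝ) / m := by
      rw [hc, ← Real.rpow_mul (le_of_lt (div_pos hNr hmpos)),
        one_div_mul_cancel (ne_of_gt hppos), Real.rpow_one]
    rw [hsum, hcp]
    rw [mul_div_cancel₀ _ (ne_of_gt hmpos)]
    rw [one_div, inv_mul_cancel₀ (ne_of_gt hNr)]
  · have hval : (fun j => (if x j ∈ T then ε * c else 0)) = fun _ => (0:ℝ) := by
      funext j
      have : x j ∉ T := by
        rw [hT]
        simp [Finset.mem_compl]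
      simp [this]
    have hsum2 : ∑ i, (if i ∈ T then ε * c else 0) = m * (ε * c) := by
      rw [Finset.sum_ite_mem, Finset.univ_inter, Finset.sum_const, nsmul_eq_mul]
    rw [hval, hsum2]
    set v := φ (fun _ => (0:ℝ)) with hv
    set K : ℝ := c * m / N with hK
    have hKpos : 0 < K := div_pos (mul_pos hcpos hmpos) hNr
    have h1 : (1 / (N:ℝ)) * (m * (ε * c)) = ε * K := by rw [hK]; ring
    rw [h1]
    have hKeq : K = (m / N) ^ (1 - 1/p) := by
      have hb : (0:ℝ) < m / N := div_pos hmpos hNr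
      have hcb : c = (m / N) ^ (-(1/p)) := by
        rw [Real.rpow_neg (le_of_lt hb), ← Real.inv_rpow (le_of_lt hb), inv_div, hc]
      have h2 : K = (m/N) ^ (-(1/p)) * (m/N) ^ (1:ℝ) := by
        rw [Real.rpow_one, ← hcb, hK]; ring
      rw [h2, ← Real.rpow_add hb]
      congr 1
      ring
    have hexp : 0 ≤ 1 - 1/p := by
      have : 1/p ≤ 1 := by
        rw [div_le_one hppos]; exact hp
      linarith
    have hle : (((N:ℝ) - n)/N) ^ (1 - 1/p) ≤ K := by
      rw [hKeq]
      apply Real.rpow_le_rpow _ _ hexp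
      · apply div_nonneg _ (le_of_lt hNr)
        have : (n:ℝ) ≤ N := by exact_mod_cast le_of_lt hnN
        linarith
      · have h3 : ((N:ℝ) - n) ≤ m := by
          rw [hmdef]
          have h4 : ((N - n : ℕ) : ℝ) ≤ (T.card : ℝ) := by exact_mod_cast hcard
          have h5 : (n:ℝ) ≤ N := by exact_mod_cast le_of_lt hnN
          rw [Nat.cast_sub (le_of_lt hnN)] at h4
          linarith
        gcongr
    refine le_trans hle ?_
    rw [hε]
    split
    · rename_i hvle
      rw [one_mul, abs_of_nonneg (by linarith)]
      linarith
    · rename_i hvgt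
      push_neg at hvgt
      rw [abs_of_neg (by nlinarith)]
      nlinarith
end

section
/- Truncated Monte Carlo on L_p^N (1 < p < 2): given f ∈ L_p^N define f̃ by f̃(i) = f(i) if |f(i)| ≤ n^{1/p} and f̃(i) = 0 otherwise. Then the bias satisfies |S_N(f) − S_N(f̃)| ≤ n^{−1+1/p}, and the second moment satisfies (1/N)∑ f̃(i)² ≤ n^{2/p−1}, so that the standard Monte Carlo estimate of S_N(f̃) with n independent uniform samples has root-mean-square error at most C·n^{−1+1/p} for some absolute constant C. -/
open Finset

lemma mc_lin {N : ℕ} (g : Fin N → ℝ) :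
    ∀ n : ℕ, (N : ℝ) * ∑ ξ : Fin n → Fin N, ∑ j, g (ξ j)
      = n * (N : ℝ) ^ n * ∑ i, g i := by
  intro n
  induction n with
  | zero => simp
  | succ n ih =>
      rw [← (Fin.consEquiv (fun _ : Fin (n+1) => Fin N)).sum_comp
        (fun ξ => ∑ j, g (ξ j))]
      have h1 : ∀ q : Fin N × (Fin n → Fin N),
          ∑ j, g ((Fin.consEquiv (fun _ : Fin (n+1) => Fin N)) q j)
            = g q.1 + ∑ j : Fin n, g (q.2 j) := by
        intro q
        rw [Fin.sum_univ_succ]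
        simp [Fin.consEquiv]
      rw [Fintype.sum_prod_type]
      simp only [h1, Finset.sum_add_distrib, Finset.sum_const, card_univ]
      simp only [Fintype.card_fun, Fintype.card_fin, nsmul_eq_mul]
      simp only [← Finset.mul_sum]
      push_cast
      linear_combination (N : ℝ) * ih

lemma mc_sq {N : ℕ} (g : Fin N → ℝ) (hg : ∑ i, g i = 0) :
    ∀ n : ℕ, (N : ℝ) * ∑ ξ : Fin n → Fin N, (∑ j, g (ξ j)) ^ 2
      = n * (N : ℝ) ^ n * ∑ i, (g i) ^ 2 := by
  intro n
  induction n with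
  | zero => simp
  | succ n ih =>
      rw [← (Fin.consEquiv (fun _ : Fin (n+1) => Fin N)).sum_comp
        (fun ξ => (∑ j, g (ξ j)) ^ 2)]
      have h1 : ∀ q : Fin N × (Fin n → Fin N),
          (∑ j, g ((Fin.consEquiv (fun _ : Fin (n+1) => Fin N)) q j)) ^ 2
            = g q.1 ^ 2 + 2 * g q.1 * (∑ j : Fin n, g (q.2 j))
              + (∑ j : Fin n, g (q.2 j)) ^ 2 := by
        intro q
        rw [Fin.sum_univ_succ]
        have h2 : ∀ j : Fin n,
            (Fin.consEquiv (fun _ : Fin (n+1) => Fin N)) q j.succ = q.2 j := by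
          intro j; simp [Fin.consEquiv]
        simp only [h2]
        have h3 : (Fin.consEquiv (fun _ : Fin (n+1) => Fin N)) q 0 = q.1 := by
          simp [Fin.consEquiv]
        rw [h3]; ring
      rw [Fintype.sum_prod_type]
      simp only [h1, Finset.sum_add_distrib, Finset.sum_const, card_univ]
      simp only [Fintype.card_fun, Fintype.card_fin, nsmul_eq_mul]
      have hcross : ∑ x : Fin N, ∑ ξ : Fin n → Fin N,
          2 * g x * (∑ j : Fin n, g (ξ j)) = 0 := by
        rw [Finset.sum_comm]
        simp only [← Finset.sum_mul, ← Finset.mul_sum]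
        simp [hg]
      rw [hcross]
      simp only [← Finset.mul_sum]
      push_cast
      linear_combination (N : ℝ) * ih

/-- Truncated Monte Carlo on `L_p^N`, `1 < p < 2`: there is an absolute constant
`C` such that for the truncation `f̃` of `f ∈ L_p^N` at level `n^{1/p}`, the
bias is at most `n^{-1+1/p}`, the second moment of `f̃` is at most `n^{2/p-1}`,
and standard Monte Carlo with `n` i.i.d. uniform samples applied to `f̃` has
root-mean-square error at most `C·n^{-1+1/p}` for `S_N(f)`. -/
theorem stmt9 :
    ∃ C : ℝ, 0 < C ∧
      ∀ (N n : ℕ), 0 < N → 0 < n → ∀ (p : ℝ), 1 < p → p < 2 →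
      ∀ (f ft : Fin N → ℝ),
      (1 / (N : ℝ)) * ∑ i, |f i| ^ p ≤ 1 →
      (∀ i, ft i = if |f i| ≤ (n : ℝ) ^ (1 / p) then f i else 0) →
      |(1 / (N : ℝ)) * ∑ i, f i - (1 / (N : ℝ)) * ∑ i, ft i| ≤
          (n : ℝ) ^ (-1 + 1 / p) ∧
      (1 / (N : ℝ)) * ∑ i, ft i ^ 2 ≤ (n : ℝ) ^ (2 / p - 1) ∧
      Real.sqrt ((1 / (N : ℝ) ^ n) * ∑ ξ : Fin n → Fin N,
          ((1 / (N : ℝ)) * ∑ i, f i - (1 / (n : ℝ)) * ∑ j, ft (ξ j)) ^ 2) ≤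
        C * (n : ℝ) ^ (-1 + 1 / p) := by
  refine ⟨2, by norm_num, ?_⟩
  intro N n hN hn p hp1 hp2 f ft hf hft
  have hp0 : (0:ℝ) < p := by linarith
  have hn0 : (0:ℝ) < (n:ℝ) := by exact_mod_cast hn
  have hN0 : (0:ℝ) < (N:ℝ) := by exact_mod_cast hN
  set B : ℝ := (n:ℝ) ^ ((1:ℝ) / p) with hBdef
  have hB0 : 0 < B := Real.rpow_pos_of_pos hn0 _
  -- part 1 pointwise
  have hpt1 : ∀ i, |f i - ft i| ≤ |f i| ^ p * (n:ℝ) ^ ((1:ℝ)/p - 1) := by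
    intro i
    rw [hft i]
    split_ifs with h
    · simp only [sub_self, abs_zero]
      positivity
    · push_neg at h
      rw [sub_zero]
      have hfi : 0 < |f i| := lt_trans hB0 h
      have key : |f i| * (n:ℝ) ^ ((p-1)/p) ≤ |f i| ^ p := by
        have e1 : (n:ℝ) ^ ((p-1)/p) = B ^ (p - 1) := by
          rw [hBdef, ← Real.rpow_mul hn0.le]
          congr 1; ring
        have h2 : B ^ (p-1) ≤ |f i| ^ (p-1) :=
          Real.rpow_le_rpow hB0.le h.le (by linarith)
        have e2 : |f i| * |f i| ^ (p-1) = |f i| ^ p := by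
          nth_rewrite 1 [← Real.rpow_one (|f i|)]
          rw [← Real.rpow_add hfi]; ring_nf
        calc |f i| * (n:ℝ) ^ ((p-1)/p) ≤ |f i| * |f i| ^ (p-1) := by
              rw [e1]; exact mul_le_mul_of_nonneg_left h2 hfi.le
          _ = |f i| ^ p := e2
      have hpow : (n:ℝ) ^ ((1:ℝ)/p - 1) = ((n:ℝ) ^ ((p-1)/p))⁻¹ := by
        rw [← Real.rpow_neg hn0.le]
        congr 1
        field_simp
        ring
      rw [hpow, ← div_eq_mul_inv, le_div_iff₀ (Real.rpow_pos_of_pos hn0 _)]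
      exact key
  have h1 : |(1 / (N : ℝ)) * ∑ i, f i - (1 / (N : ℝ)) * ∑ i, ft i| ≤
      (n : ℝ) ^ (-1 + 1 / p) := by
    have e : (1 / (N : ℝ)) * ∑ i, f i - (1 / (N : ℝ)) * ∑ i, ft i
        = (1 / (N : ℝ)) * ∑ i, (f i - ft i) := by
      rw [Finset.sum_sub_distrib]; ring
    rw [e, abs_mul, abs_of_pos (by positivity : (0:ℝ) < 1 / (N:ℝ))]
    have hre : (-1 + 1/p : ℝ) = 1/p - 1 := by ring
    rw [hre]
    calc (1 / (N:ℝ)) * |∑ i, (f i - ft i)|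
        ≤ (1 / (N:ℝ)) * ∑ i, |f i - ft i| := by
          gcongr
          exact Finset.abs_sum_le_sum_abs _ _
      _ ≤ (1 / (N:ℝ)) * ∑ i, |f i| ^ p * (n:ℝ) ^ ((1:ℝ)/p - 1) := by
          gcongr with i
          exact hpt1 i
      _ = (n:ℝ) ^ ((1:ℝ)/p - 1) * ((1 / (N:ℝ)) * ∑ i, |f i| ^ p) := by
          rw [← Finset.sum_mul]; ring
      _ ≤ (n:ℝ) ^ ((1:ℝ)/p - 1) * 1 := by
          exact mul_le_mul_of_nonneg_left hf (Real.rpow_nonneg hn0.le _)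
      _ = (n:ℝ) ^ ((1:ℝ)/p - 1) := mul_one _
  -- part 2 pointwise
  have hpt2 : ∀ i, ft i ^ 2 ≤ |f i| ^ p * (n:ℝ) ^ ((2:ℝ)/p - 1) := by
    intro i
    rw [hft i]
    split_ifs with h
    · have e2 : (n:ℝ) ^ ((2:ℝ)/p - 1) = B ^ (2 - p) := by
        rw [hBdef, ← Real.rpow_mul hn0.le]
        congr 1
        field_simp
      rw [e2]
      have e3 : f i ^ 2 = |f i| ^ p * |f i| ^ ((2:ℝ) - p) := by
        rw [← Real.rpow_add' (abs_nonneg _) (by norm_num : p + (2 - p) ≠ 0)]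
        have hee : p + (2 - p) = ((2:ℕ):ℝ) := by push_cast; ring
        rw [hee, Real.rpow_natCast, sq_abs]
      rw [e3]
      exact mul_le_mul_of_nonneg_left
        (Real.rpow_le_rpow (abs_nonneg _) h (by linarith))
        (Real.rpow_nonneg (abs_nonneg _) _)
    · simp only [ne_eq, OfNat.ofNat_ne_zero, not_false_eq_true, zero_pow]
      positivity
  have h2 : (1 / (N : ℝ)) * ∑ i, ft i ^ 2 ≤ (n : ℝ) ^ ((2:ℝ) / p - 1) := by
    calc (1 / (N:ℝ)) * ∑ i, ft i ^ 2
        ≤ (1 / (N:ℝ)) * ∑ i, |f i| ^ p * (n:ℝ) ^ ((2:ℝ)/p - 1) := by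
          gcongr with i
          exact hpt2 i
      _ = (n:ℝ) ^ ((2:ℝ)/p - 1) * ((1 / (N:ℝ)) * ∑ i, |f i| ^ p) := by
          rw [← Finset.sum_mul]; ring
      _ ≤ (n:ℝ) ^ ((2:ℝ)/p - 1) * 1 := by
          exact mul_le_mul_of_nonneg_left hf (Real.rpow_nonneg hn0.le _)
      _ = (n:ℝ) ^ ((2:ℝ)/p - 1) := mul_one _
  refine ⟨h1, h2, ?_⟩
  -- part 3
  set μ : ℝ := (1 / (N : ℝ)) * ∑ i, f i with hμdef
  set a : ℝ := (1 / (N : ℝ)) * ∑ i, ft i with hadef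
  obtain ⟨g, hgdef⟩ : ∃ g : Fin N → ℝ, g = fun i => ft i - a := ⟨_, rfl⟩
  have hsumft : ∑ i, ft i = (N:ℝ) * a := by
    rw [hadef]; field_simp
  have hgsum : ∑ i, g i = 0 := by
    simp only [hgdef, Finset.sum_sub_distrib, Finset.sum_const, card_univ,
      Fintype.card_fin, nsmul_eq_mul, hsumft, sub_self]
  have hT : ∀ ξ : Fin n → Fin N,
      μ - (1 / (n:ℝ)) * ∑ j, ft (ξ j)
        = (μ - a) - (1 / (n:ℝ)) * ∑ j, g (ξ j) := by
    intro ξ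
    simp only [hgdef, Finset.sum_sub_distrib, Finset.sum_const, card_univ,
      Fintype.card_fin, nsmul_eq_mul]
    field_simp
    ring
  have hz : ∑ ξ : Fin n → Fin N, ∑ j, g (ξ j) = 0 := by
    have := mc_lin g n
    rw [hgsum, mul_zero] at this
    exact (mul_eq_zero.mp this).resolve_left hN0.ne'
  have hsq := mc_sq g hgsum n
  have hE : (1 / (N : ℝ) ^ n) * ∑ ξ : Fin n → Fin N,
      (μ - (1 / (n:ℝ)) * ∑ j, ft (ξ j)) ^ 2
        = (μ - a) ^ 2 + (1 / ((n:ℝ) * (N:ℝ))) * ∑ i, (g i) ^ 2 := by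
    have hexp : ∑ ξ : Fin n → Fin N, (μ - (1 / (n:ℝ)) * ∑ j, ft (ξ j)) ^ 2
        = ∑ ξ : Fin n → Fin N, ((μ - a) ^ 2
            - (2 * (μ - a) / (n:ℝ)) * (∑ j, g (ξ j))
            + (1 / (n:ℝ)^2) * (∑ j, g (ξ j)) ^ 2) :=
      Finset.sum_congr rfl fun ξ _ => by rw [hT ξ]; ring
    have hs2 : ∑ ξ : Fin n → Fin N, (∑ j, g (ξ j)) ^ 2
        = (n:ℝ) * (N:ℝ) ^ n * (∑ i, (g i) ^ 2) / (N:ℝ) := by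
      rw [eq_div_iff hN0.ne']
      linear_combination hsq
    rw [hexp, Finset.sum_add_distrib, Finset.sum_sub_distrib, Finset.sum_const,
      card_univ, ← Finset.mul_sum, ← Finset.mul_sum, hz, mul_zero, sub_zero, hs2]
    simp only [Fintype.card_fun, Fintype.card_fin, nsmul_eq_mul]
    have hNne : (N:ℝ) ≠ 0 := hN0.ne'
    have hnne : (n:ℝ) ≠ 0 := hn0.ne'
    field_simp
    push_cast
    ring
  have hvar : (1 / (N:ℝ)) * ∑ i, (g i) ^ 2 ≤ (1 / (N:ℝ)) * ∑ i, ft i ^ 2 := by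
    have e : ∑ i, (g i) ^ 2 = ∑ i, ft i ^ 2 - (N:ℝ) * a ^ 2 := by
      simp only [hgdef, sub_sq]
      rw [Finset.sum_add_distrib, Finset.sum_sub_distrib, Finset.sum_const,
        card_univ, Fintype.card_fin, nsmul_eq_mul, ← Finset.sum_mul,
        ← Finset.mul_sum]
      rw [hsumft]; ring
    rw [e]
    have h0 : (0:ℝ) ≤ (N:ℝ) * a ^ 2 := by positivity
    exact mul_le_mul_of_nonneg_left (by linarith) (by positivity)
  -- rpow arithmetic
  have rp1 : ((n:ℝ) ^ ((-1:ℝ) + 1/p)) ^ 2 = (n:ℝ) ^ ((2:ℝ)/p - 2) := by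
    rw [← Real.rpow_natCast ((n:ℝ) ^ ((-1:ℝ) + 1/p)) 2, ← Real.rpow_mul hn0.le]
    congr 1; push_cast; ring
  have rp2 : (1 / (n:ℝ)) * (n:ℝ) ^ ((2:ℝ)/p - 1) = (n:ℝ) ^ ((2:ℝ)/p - 2) := by
    rw [one_div, ← Real.rpow_neg_one (n:ℝ), ← Real.rpow_add hn0]
    congr 1; ring
  have hEle : (1 / (N : ℝ) ^ n) * ∑ ξ : Fin n → Fin N,
      (μ - (1 / (n:ℝ)) * ∑ j, ft (ξ j)) ^ 2
        ≤ (2 * (n:ℝ) ^ ((-1:ℝ) + 1/p)) ^ 2 := by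
    rw [hE]
    have b1 : (μ - a) ^ 2 ≤ ((n:ℝ) ^ ((-1:ℝ) + 1/p)) ^ 2 := by
      rw [← sq_abs]
      exact pow_le_pow_left₀ (abs_nonneg _) h1 2
    have b2 : (1 / ((n:ℝ) * (N:ℝ))) * ∑ i, (g i) ^ 2
        ≤ (n:ℝ) ^ ((2:ℝ)/p - 2) := by
      have e : (1 / ((n:ℝ) * (N:ℝ))) * ∑ i, (g i) ^ 2
          = (1 / (n:ℝ)) * ((1 / (N:ℝ)) * ∑ i, (g i) ^ 2) := by ring
      rw [e, ← rp2]
      exact mul_le_mul_of_nonneg_left (hvar.trans h2) (by positivity)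
    have hnn : (0:ℝ) ≤ (n:ℝ) ^ ((2:ℝ)/p - 2) := Real.rpow_nonneg hn0.le _
    rw [mul_pow, rp1]
    nlinarith [b1, b2, rp1]
  calc Real.sqrt ((1 / (N : ℝ) ^ n) * ∑ ξ : Fin n → Fin N,
          (μ - (1 / (n:ℝ)) * ∑ j, ft (ξ j)) ^ 2)
      ≤ Real.sqrt ((2 * (n:ℝ) ^ ((-1:ℝ) + 1/p)) ^ 2) := Real.sqrt_le_sqrt hEle
    _ = 2 * (n:ℝ) ^ ((-1:ℝ) + 1/p) := Real.sqrt_sq (by positivity)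
end

section
/- Upper bound achieved by the Mathé estimator: the randomized algorithm A_n^ω(f) = c·∑_{j=1}^n f(i_j^ω), where {i_1^ω,…,i_n^ω} is a uniformly random n-subset of {1,…,N} and c = (n + √(n(N−n)/(N−1)))^{−1}, satisfies sup_{f ∈ L_2^N} (E(S_N(f) − A_n^ω(f))²)^{1/2} = 1/(1 + √((N−1)n/(N−n))). -/
open Finset

private lemma count_one {α : Type*} [DecidableEq α] (u : Finset α) (n : ℕ) (hn : 1 ≤ n)
    (i : α) (hi : i ∈ u) :
    ((u.powersetCard n).filter (fun s => i ∈ s)).card = (u.card - 1).choose (n - 1) := by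
  rw [← Finset.card_erase_of_mem hi, ← Finset.card_powersetCard (n - 1) (u.erase i)]
  apply Finset.card_nbij' (fun s => s.erase i) (fun t => insert i t)
  · intro s hs
    simp only [Finset.mem_coe, Finset.mem_filter, Finset.mem_powersetCard] at hs ⊢
    obtain ⟨⟨hsu, hcard⟩, his⟩ := hs
    exact ⟨Finset.erase_subset_erase i hsu, by rw [Finset.card_erase_of_mem his, hcard]⟩
  · intro t ht
    simp only [Finset.mem_coe, Finset.mem_filter, Finset.mem_powersetCard] at ht ⊢
    obtain ⟨htu, hcard⟩ := ht
    have hit : i ∉ t := fun h => (Finset.mem_erase.1 (htu h)).1 rfl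
    refine ⟨⟨?_, ?_⟩, Finset.mem_insert_self i t⟩
    · exact Finset.insert_subset hi (htu.trans (Finset.erase_subset i u))
    · rw [Finset.card_insert_of_notMem hit, hcard]; omega
  · intro s hs
    simp only [Finset.mem_coe, Finset.mem_filter] at hs
    exact Finset.insert_erase hs.2
  · intro t ht
    simp only [Finset.mem_coe, Finset.mem_powersetCard] at ht
    have hit : i ∉ t := fun h => (Finset.mem_erase.1 (ht.1 h)).1 rfl
    exact Finset.erase_insert hit

private lemma count_two {α : Type*} [DecidableEq α] (u : Finset α) (n : ℕ) (hn : 2 ≤ n)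
    (i j : α) (hi : i ∈ u) (hj : j ∈ u) (hij : i ≠ j) :
    ((u.powersetCard n).filter (fun s => i ∈ s ∧ j ∈ s)).card
      = (u.card - 2).choose (n - 2) := by
  have hje : j ∈ u.erase i := Finset.mem_erase.2 ⟨hij.symm, hj⟩
  have hcard2 : ((u.erase i).erase j).card = u.card - 2 := by
    rw [Finset.card_erase_of_mem hje, Finset.card_erase_of_mem hi]; omega
  rw [← hcard2, ← Finset.card_powersetCard (n - 2) ((u.erase i).erase j)]
  apply Finset.card_nbij' (fun s => (s.erase i).erase j) (fun t => insert i (insert j t))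
  · intro s hs
    simp only [Finset.mem_coe, Finset.mem_filter, Finset.mem_powersetCard] at hs ⊢
    obtain ⟨⟨hsu, hcard⟩, his, hjs⟩ := hs
    have hjse : j ∈ s.erase i := Finset.mem_erase.2 ⟨hij.symm, hjs⟩
    refine ⟨Finset.erase_subset_erase j (Finset.erase_subset_erase i hsu), ?_⟩
    rw [Finset.card_erase_of_mem hjse, Finset.card_erase_of_mem his, hcard]; omega
  · intro t ht
    simp only [Finset.mem_coe, Finset.mem_filter, Finset.mem_powersetCard] at ht ⊢
    obtain ⟨htu, hcard⟩ := ht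
    have hjt : j ∉ t := fun h => (Finset.mem_erase.1 (htu h)).1 rfl
    have hit : i ∉ t := fun h =>
      (Finset.mem_erase.1 ((Finset.erase_subset j (u.erase i)) (htu h))).1 rfl
    have hijt : i ∉ insert j t := by simp [hij, hit]
    have htsubu : t ⊆ u := htu.trans ((Finset.erase_subset j (u.erase i)).trans (Finset.erase_subset i u))
    refine ⟨⟨?_, ?_⟩, Finset.mem_insert_self i _, Finset.mem_insert_of_mem (Finset.mem_insert_self j t)⟩
    · exact Finset.insert_subset hi (Finset.insert_subset hj htsubu)
    · rw [Finset.card_insert_of_notMem hijt, Finset.card_insert_of_notMem hjt, hcard]; omega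
  · intro s hs
    simp only [Finset.mem_coe, Finset.mem_filter] at hs
    obtain ⟨-, his, hjs⟩ := hs
    have hjse : j ∈ s.erase i := Finset.mem_erase.2 ⟨hij.symm, hjs⟩
    dsimp only
    rw [Finset.insert_erase hjse, Finset.insert_erase his]
  · intro t ht
    simp only [Finset.mem_coe, Finset.mem_powersetCard] at ht
    have hjt : j ∉ t := fun h => (Finset.mem_erase.1 (ht.1 h)).1 rfl
    have hit : i ∉ t := fun h =>
      (Finset.mem_erase.1 ((Finset.erase_subset j (u.erase i)) (ht.1 h))).1 rfl
    have hijt : i ∉ insert j t := by simp [hij, hit]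
    dsimp only
    rw [Finset.erase_insert hijt, Finset.erase_insert hjt]

private lemma sq_sum {α : Type*} [DecidableEq α] (s : Finset α) (f : α → ℝ) :
    (∑ i ∈ s, f i) ^ 2 = ∑ i ∈ s, f i ^ 2 + ∑ p ∈ s.offDiag, f p.1 * f p.2 := by
  rw [sq, Finset.sum_mul_sum, ← Finset.sum_product', ← Finset.diag_union_offDiag,
    Finset.sum_union (Finset.disjoint_diag_offDiag s), Finset.sum_diag]
  simp [sq]

private lemma sum_S1 (N n : ℕ) (hn : 1 ≤ n) (g : Fin N → ℝ) :
    ∑ s ∈ Finset.powersetCard n (Finset.univ : Finset (Fin N)), ∑ i ∈ s, g i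
      = (((N - 1).choose (n - 1) : ℕ) : ℝ) * ∑ i, g i := by
  have h1 : ∀ s ∈ Finset.powersetCard n (Finset.univ : Finset (Fin N)),
      ∑ i ∈ s, g i = ∑ i : Fin N, if i ∈ s then g i else 0 := by
    intro s _
    rw [Finset.sum_ite_mem, Finset.univ_inter]
  rw [Finset.sum_congr rfl h1, Finset.sum_comm, Finset.mul_sum]
  refine Finset.sum_congr rfl fun i _ => ?_
  rw [← Finset.sum_filter, Finset.sum_const,
    count_one Finset.univ n hn i (Finset.mem_univ i), Finset.card_univ, Fintype.card_fin,
    nsmul_eq_mul]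

private lemma sum_S2 (N n : ℕ) (D : ℝ)
    (hD : ∀ i j : Fin N, i ≠ j →
      ((((Finset.powersetCard n (Finset.univ : Finset (Fin N))).filter
        (fun s => i ∈ s ∧ j ∈ s)).card : ℕ) : ℝ) = D)
    (hn : 1 ≤ n) (f : Fin N → ℝ) :
    ∑ s ∈ Finset.powersetCard n (Finset.univ : Finset (Fin N)), (∑ i ∈ s, f i) ^ 2
      = (((N - 1).choose (n - 1) : ℕ) : ℝ) * ∑ i, f i ^ 2
        + D * ((∑ i, f i) ^ 2 - ∑ i, f i ^ 2) := by
  have h1 : ∀ s ∈ Finset.powersetCard n (Finset.univ : Finset (Fin N)),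
      (∑ i ∈ s, f i) ^ 2 = ∑ i ∈ s, f i ^ 2 +
        ∑ p ∈ (Finset.univ : Finset (Fin N)).offDiag,
          (if p.1 ∈ s ∧ p.2 ∈ s then f p.1 * f p.2 else 0) := by
    intro s _
    rw [sq_sum, ← Finset.sum_filter]
    congr 2
    ext p
    simp only [Finset.mem_offDiag, Finset.mem_filter, Finset.mem_univ, true_and]
    tauto
  rw [Finset.sum_congr rfl h1, Finset.sum_add_distrib, sum_S1 N n hn, Finset.sum_comm]
  congr 1
  have h2 : ∀ p ∈ (Finset.univ : Finset (Fin N)).offDiag,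
      (∑ s ∈ Finset.powersetCard n (Finset.univ : Finset (Fin N)),
        if p.1 ∈ s ∧ p.2 ∈ s then f p.1 * f p.2 else 0) = D * (f p.1 * f p.2) := by
    intro p hp
    have hne : p.1 ≠ p.2 := (Finset.mem_offDiag.1 hp).2.2
    rw [← Finset.sum_filter, Finset.sum_const, nsmul_eq_mul, hD p.1 p.2 hne]
  rw [Finset.sum_congr rfl h2, ← Finset.mul_sum]
  congr 1
  have := sq_sum (Finset.univ : Finset (Fin N)) f
  linarith

private lemma key (N n : ℕ) (hn : 1 ≤ n) (hnN : n < N) (c a : ℝ)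
    (hc1 : c * ((n : ℝ) + a) = 1)
    (ha2 : a ^ 2 * ((N : ℝ) - 1) = (n : ℝ) * ((N : ℝ) - (n : ℝ))) (f : Fin N → ℝ) :
    ∑ s ∈ Finset.powersetCard n (Finset.univ : Finset (Fin N)),
        ((1 / (N : ℝ)) * ∑ i, f i - c * ∑ i ∈ s, f i) ^ 2
      = (c * a) ^ 2 * ((N.choose n : ℝ) / N * ∑ i, f i ^ 2) := by
  classical
  have hN2 : 2 ≤ N := by omega
  -- the pair count D
  obtain ⟨D, hD, hB2⟩ : ∃ D : ℝ,
      (∀ i j : Fin N, i ≠ j →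
        ((((Finset.powersetCard n (Finset.univ : Finset (Fin N))).filter
          (fun s => i ∈ s ∧ j ∈ s)).card : ℕ) : ℝ) = D) ∧
      (n : ℝ) * ((n : ℝ) - 1) * (N.choose n : ℝ) = (N : ℝ) * ((N : ℝ) - 1) * D := by
    rcases eq_or_lt_of_le hn with h1 | h2
    · subst h1
      refine ⟨0, fun i j hij => ?_, by norm_num⟩
      rw [Nat.cast_eq_zero, Finset.card_eq_zero, Finset.filter_eq_empty_iff]
      intro s hs
      rw [Finset.mem_powersetCard] at hs
      rintro ⟨his, hjs⟩
      obtain ⟨x, rfl⟩ := Finset.card_eq_one.1 hs.2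
      rw [Finset.mem_singleton] at his hjs
      exact hij (his.trans hjs.symm)
    · have hn2 : 2 ≤ n := h2
      refine ⟨((N - 2).choose (n - 2) : ℕ), fun i j hij => ?_, ?_⟩
      · rw [count_two Finset.univ n hn2 i j (Finset.mem_univ i) (Finset.mem_univ j) hij,
          Finset.card_univ, Fintype.card_fin]
      · -- Nat identity
        have eN1 : N - 1 + 1 = N := by omega
        have en1 : n - 1 + 1 = n := by omega
        have eN2 : N - 2 + 1 = N - 1 := by omega
        have en2 : n - 2 + 1 = n - 1 := by omega
        have A := Nat.add_one_mul_choose_eq (N - 1) (n - 1)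
        rw [eN1, en1] at A
        have B := Nat.add_one_mul_choose_eq (N - 2) (n - 2)
        rw [eN2, en2] at B
        have A' : (N : ℝ) * (((N - 1).choose (n - 1) : ℕ) : ℝ)
            = (N.choose n : ℝ) * (n : ℝ) := by exact_mod_cast A
        have B' : ((N : ℝ) - 1) * (((N - 2).choose (n - 2) : ℕ) : ℝ)
            = (((N - 1).choose (n - 1) : ℕ) : ℝ) * ((n : ℝ) - 1) := by
          have cN : ((N - 1 : ℕ) : ℝ) = (N : ℝ) - 1 := by
            push_cast [Nat.cast_sub (by omega : 1 ≤ N)]; ring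
          have cn : ((n - 1 : ℕ) : ℝ) = (n : ℝ) - 1 := by
            push_cast [Nat.cast_sub hn]; ring
          rw [← cN, ← cn]; exact_mod_cast B
        linear_combination (-((n : ℝ) - 1)) * A' - (N : ℝ) * B'
  have hB1 : (n : ℝ) * (N.choose n : ℝ) = (N : ℝ) * (((N - 1).choose (n - 1) : ℕ) : ℝ) := by
    have eN1 : N - 1 + 1 = N := by omega
    have en1 : n - 1 + 1 = n := by omega
    have A := Nat.add_one_mul_choose_eq (N - 1) (n - 1)
    rw [eN1, en1] at A
    have A' : (N : ℝ) * (((N - 1).choose (n - 1) : ℕ) : ℝ)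
        = (N.choose n : ℝ) * (n : ℝ) := by exact_mod_cast A
    linear_combination -A'
  -- expand the square
  have expand : ∀ s ∈ Finset.powersetCard n (Finset.univ : Finset (Fin N)),
      ((1 / (N : ℝ)) * ∑ i, f i - c * ∑ i ∈ s, f i) ^ 2
        = ((1 / (N : ℝ)) * ∑ i, f i) ^ 2
          - (2 * c * ((1 / (N : ℝ)) * ∑ i, f i)) * (∑ i ∈ s, f i)
          + c ^ 2 * (∑ i ∈ s, f i) ^ 2 := fun s _ => by ring
  rw [Finset.sum_congr rfl expand, Finset.sum_add_distrib, Finset.sum_sub_distrib,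
    Finset.sum_const, ← Finset.mul_sum, ← Finset.mul_sum, sum_S1 N n hn f,
    sum_S2 N n D hD hn f, Finset.card_powersetCard, Finset.card_univ, Fintype.card_fin,
    nsmul_eq_mul]
  -- now pure algebra
  have hNpos : (0:ℝ) < (N:ℝ) := by exact_mod_cast (by omega : 0 < N)
  have hN1 : (1:ℝ) < (N:ℝ) := by exact_mod_cast (by omega : 1 < N)
  have hNne : (N:ℝ) ≠ 0 := ne_of_gt hNpos
  have hN1ne : (N:ℝ) - 1 ≠ 0 := by linarith
  have hca : c * a = 1 - c * (n:ℝ) := by linear_combination hc1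
  have hkey : (1 - c*(n:ℝ))^2 * ((N:ℝ)-1) = c^2 * (n:ℝ) * ((N:ℝ)-(n:ℝ)) := by
    linear_combination c^2*ha2 - ((N:ℝ)-1)*(1 - c*(n:ℝ) + c*a)*hca
  have hC1R : (((N - 1).choose (n - 1) : ℕ) : ℝ) = (n:ℝ) * (N.choose n : ℝ) / (N:ℝ) := by
    field_simp
    linear_combination -hB1
  have hDR : D = (n:ℝ) * ((n:ℝ) - 1) * (N.choose n : ℝ) / ((N:ℝ) * ((N:ℝ) - 1)) := by
    field_simp
    linear_combination -hB2
  rw [hC1R, hDR, show ((c*a)^2 : ℝ) = (1 - c*(n:ℝ))^2 by rw [hca]]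
  field_simp
  linear_combination ((N.choose n : ℝ) * (∑ i, f i)^2
    - (N.choose n : ℝ) * (∑ i, f i ^ 2) * (N:ℝ)) * hkey


/-- The Mathé estimator `A(f) = c·∑_{i∈s} f i` over a uniformly random
`n`-subset `s` of `{1,…,N}`, with `c = (n + √(n(N-n)/(N-1)))⁻¹`, has worst-case
root-mean-square error on `L_2^N` exactly `1/(1 + √((N-1)n/(N-n)))`. -/
theorem stmt12 (N n : ℕ) (hN : 2 ≤ N) (hn : 1 ≤ n) (hnN : n < N) (c : ℝ)
    (hc : c = ((n : ℝ) + Real.sqrt ((n : ℝ) * ((N : ℝ) - n) / ((N : ℝ) - 1)))⁻¹) :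
    sSup {e : ℝ | ∃ f : Fin N → ℝ, (1 / (N : ℝ)) * ∑ i, f i ^ 2 ≤ 1 ∧
        e = Real.sqrt ((1 / (N.choose n : ℝ)) *
          ∑ s ∈ Finset.powersetCard n (Finset.univ : Finset (Fin N)),
            ((1 / (N : ℝ)) * ∑ i, f i - c * ∑ i ∈ s, f i) ^ 2)} =
      1 / (1 + Real.sqrt (((N : ℝ) - 1) * n / ((N : ℝ) - n))) := by
  have hN1 : (1:ℝ) < (N:ℝ) := by exact_mod_cast (by omega : 1 < N)
  have hNne : (N:ℝ) ≠ 0 := by positivity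
  have hnr : (1:ℝ) ≤ (n:ℝ) := by exact_mod_cast hn
  have hnN' : (n:ℝ) < (N:ℝ) := by exact_mod_cast hnN
  have hB_pos : (0:ℝ) < (N.choose n : ℝ) := by
    exact_mod_cast Nat.choose_pos hnN.le
  have hBne : (N.choose n : ℝ) ≠ 0 := ne_of_gt hB_pos
  have hN1ne : (N:ℝ) - 1 ≠ 0 := by linarith
  have hNnne : (N:ℝ) - (n:ℝ) ≠ 0 := by linarith
  set a := Real.sqrt ((n : ℝ) * ((N : ℝ) - n) / ((N : ℝ) - 1)) with ha
  have harg_pos : 0 < (n : ℝ) * ((N : ℝ) - n) / ((N : ℝ) - 1) := by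
    apply div_pos (mul_pos (by linarith) (by linarith)) (by linarith)
  have ha_pos : 0 < a := Real.sqrt_pos.2 harg_pos
  have ha2 : a ^ 2 * ((N:ℝ) - 1) = (n:ℝ) * ((N:ℝ) - n) := by
    rw [ha, Real.sq_sqrt harg_pos.le, div_mul_eq_mul_div, mul_div_assoc,
      div_self hN1ne, mul_one]
  have hna_pos : 0 < (n:ℝ) + a := by linarith
  have hc1 : c * ((n : ℝ) + a) = 1 := by
    rw [hc, inv_mul_cancel₀ (ne_of_gt hna_pos)]
  have hc_pos : 0 < c := by rw [hc]; positivity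
  have hK_pos : 0 < c * a := mul_pos hc_pos ha_pos
  have hβ : Real.sqrt (((N : ℝ) - 1) * n / ((N : ℝ) - n)) = (n:ℝ) / a := by
    rw [eq_div_iff (ne_of_gt ha_pos), ha,
      ← Real.sqrt_mul (div_nonneg (mul_nonneg (by linarith) (by positivity)) (by linarith)),
      show ((N:ℝ)-1) * n / ((N:ℝ)-n) * ((n:ℝ) * ((N:ℝ)-n) / ((N:ℝ)-1)) = (n:ℝ)^2 by
        field_simp]
    exact Real.sqrt_sq (by positivity)
  have hRHS : 1 / (1 + Real.sqrt (((N : ℝ) - 1) * n / ((N : ℝ) - n))) = c * a := by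
    have h1b : (0:ℝ) < 1 + (n:ℝ)/a := by
      have : (0:ℝ) ≤ (n:ℝ)/a := div_nonneg (Nat.cast_nonneg n) ha_pos.le
      linarith
    rw [hβ, div_eq_iff (ne_of_gt h1b)]
    field_simp
    linear_combination -hc1
  rw [hRHS]
  apply IsGreatest.csSup_eq
  constructor
  · -- membership via f ≡ 1
    refine ⟨fun _ => 1, ?_, ?_⟩
    · have h1 : ∑ _i : Fin N, ((1:ℝ)) ^ 2 = N := by simp
      rw [h1, one_div_mul_cancel hNne]
    · rw [key N n hn hnN c a hc1 ha2 (fun _ => 1)]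
      have h1 : ∑ _i : Fin N, ((1:ℝ)) ^ 2 = N := by simp
      rw [h1, show (1 / (N.choose n : ℝ)) * ((c * a) ^ 2 * ((N.choose n : ℝ) / N * N))
          = (c * a) ^ 2 by field_simp]
      exact (Real.sqrt_sq hK_pos.le).symm
  · -- upper bound
    rintro e ⟨f, hf, rfl⟩
    rw [key N n hn hnN c a hc1 ha2 f]
    have hQ0 : (0:ℝ) ≤ ∑ i, f i ^ 2 := Finset.sum_nonneg fun i _ => sq_nonneg _
    have heq : (1 / (N.choose n : ℝ)) * ((c * a) ^ 2 * ((N.choose n : ℝ) / N * ∑ i, f i ^ 2))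
        = (c * a) ^ 2 * ((1 / (N : ℝ)) * ∑ i, f i ^ 2) := by
      field_simp
    rw [heq]
    calc Real.sqrt ((c * a) ^ 2 * ((1 / (N : ℝ)) * ∑ i, f i ^ 2))
        ≤ Real.sqrt ((c * a) ^ 2) := by
          apply Real.sqrt_le_sqrt
          calc (c * a) ^ 2 * ((1 / (N : ℝ)) * ∑ i, f i ^ 2) ≤ (c * a) ^ 2 * 1 :=
                mul_le_mul_of_nonneg_left hf (sq_nonneg _)
            _ = (c * a) ^ 2 := mul_one _
      _ = c * a := Real.sqrt_sq hK_pos.le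
end
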